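/- arXiv:1804.04693 — 4 statements merged into one kernel-verified Lean document; each statement's English description precedes it below -/
import Mathlib

section
/- For all partitions λ, μ, ν of n, the Kronecker coefficient satisfies g(λ,μ,ν) ≤ f^λ · min(f^μ/f^ν, f^ν/f^μ); in particular g(λ,μ,ν) ≤ f^λ. -/
open CategoryTheory

/-- The symmetric group `Sₙ`, realized as permutations of `Fin n`. -/
abbrev SymGrp (n : ℕ) : Type := Equiv.Perm (Fin n)

/-- The dimension of a representation. -/
noncomputable def dimRep {n : ℕ} (V : FDRep ℂ (SymGrp n)) : ℕ := Module.finrank ℂ V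

/-- `V` is a complete family of pairwise non-isomorphic irreducible (complex)
representations of the symmetric group `Sₙ`, indexed by the partitions of `n`. -/
def IsIrrFamily {n : ℕ} (V : Nat.Partition n → FDRep ℂ (SymGrp n)) : Prop :=
  (∀ l, Simple (V l)) ∧
  (∀ l m : Nat.Partition n, Nonempty (V l ≅ V m) → l = m) ∧
  (∀ W : FDRep ℂ (SymGrp n), Simple W → ∃ l, Nonempty (W ≅ V l))

/-- The Kronecker coefficient `g(λ,μ,ν)`: the multiplicity of the irreducible `V λ` in
the (internal) tensor product `V μ ⊗ V ν`, computed as `dim Hom(V μ ⊗ V ν, V λ)`. -/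
noncomputable def kron {n : ℕ} (V : Nat.Partition n → FDRep ℂ (SymGrp n))
    (l m v : Nat.Partition n) : ℕ :=
  Module.finrank ℂ ((MonoidalCategoryStruct.tensorObj (V m) (V v)) ⟶ V l)

namespace KronAux

open CategoryTheory Module FDRep Representation

noncomputable section

variable {G : Type} [Group G] [Fintype G]

def subRep (W : FDRep ℂ G) (p : Submodule ℂ W) (hp : ∀ (g : G), ∀ x ∈ p, W.ρ g x ∈ p) :
    FDRep ℂ G :=
  FDRep.of (V := p)
    { toFun := fun g => (W.ρ g).restrict (fun x hx => hp g x hx)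
      map_one' := by ext x; simp [LinearMap.restrict_apply]
      map_mul' := by intro g h; ext x; simp [LinearMap.restrict_apply] }

theorem subRep_finrank (W : FDRep ℂ G) (p : Submodule ℂ W) (hp) :
    finrank ℂ (subRep W p hp) = finrank ℂ p := rfl

def subRepIncl (W : FDRep ℂ G) (p : Submodule ℂ W) (hp) : subRep W p hp ⟶ W where
  hom := InducedCategory.homMk (ModuleCat.ofHom p.subtype)
  comm := fun g => by ext x; rfl

theorem hom_ker_eq_bot {S W : FDRep ℂ G} [Simple S] {φ : S ⟶ W} (hφ : φ ≠ 0) :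
    LinearMap.ker φ.hom.hom.hom = ⊥ := by
  by_contra hne
  set p := LinearMap.ker φ.hom.hom.hom with hp0
  have hp : ∀ (g : G), ∀ x ∈ p, S.ρ g x ∈ p := by
    intro g x hx
    have hc : φ.hom.hom.hom ((S.ρ g) x) = (W.ρ g) (φ.hom.hom.hom x) := LinearMap.congr_fun (congrArg (fun h => h.hom.hom) (φ.comm g)) x
    have hx' : φ.hom.hom.hom x = 0 := hx
    show S.ρ g x ∈ LinearMap.ker φ.hom.hom.hom
    rw [LinearMap.mem_ker]
    exact hc.trans (by rw [hx', map_zero])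
  let ι := subRepIncl S p hp
  have hmod : Mono ((forget₂ (FGModuleCat ℂ) (ModuleCat ℂ)).map ι.hom) := by
    rw [ModuleCat.mono_iff_injective]
    exact Subtype.val_injective
  have hmono2 : Mono ι.hom := Functor.mono_of_mono_map (forget₂ (FGModuleCat ℂ) (ModuleCat ℂ)) hmod
  have hmono : Mono ι := by
    apply Functor.mono_of_mono_map (Action.forget (FGModuleCat ℂ) (MonCat.of G))
    exact hmono2
  have hι : ι ≠ 0 := by
    obtain ⟨x, hxp, hx0⟩ := (Submodule.ne_bot_iff p).mp hne
    intro h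
    have : ι.hom.hom.hom ⟨x, hxp⟩ = 0 := by rw [h]; rfl
    exact hx0 this
  have : IsIso ι := isIso_of_mono_of_nonzero hι
  have he : finrank ℂ p = finrank ℂ S := (FDRep.isoToLinearEquiv (asIso ι)).finrank_eq
  have : p = ⊤ := Submodule.eq_top_of_finrank_eq he
  apply hφ
  apply Action.hom_ext
  apply FGModuleCat.hom_ext
  apply LinearMap.ext
  intro x
  have : x ∈ p := this ▸ Submodule.mem_top
  exact this

theorem rho_mul_apply (X : FDRep ℂ G) (a b : G) (x : X) :
    X.ρ (a * b) x = X.ρ a (X.ρ b x) := by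
  rw [map_mul, Module.End.mul_apply]

theorem sum_comp' {R M N P : Type} [CommRing R] [AddCommGroup M] [AddCommGroup N]
    [AddCommGroup P] [Module R M] [Module R N] [Module R P] {ι : Type} (s : Finset ι)
    (f : ι → (N →ₗ[R] P)) (g : M →ₗ[R] N) :
    (∑ i ∈ s, f i) ∘ₗ g = ∑ i ∈ s, (f i ∘ₗ g) := by ext x; simp

theorem comp_sum' {R M N P : Type} [CommRing R] [AddCommGroup M] [AddCommGroup N]
    [AddCommGroup P] [Module R M] [Module R N] [Module R P] {ι : Type} (s : Finset ι)
    (f : ι → (M →ₗ[R] N)) (g : N →ₗ[R] P) :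
    g ∘ₗ (∑ i ∈ s, f i) = ∑ i ∈ s, (g ∘ₗ f i) := by ext x; simp

theorem exists_retraction {S W : FDRep ℂ G} [Simple S] {φ : S ⟶ W} (hφ : φ ≠ 0) :
    ∃ r : W ⟶ S, φ ≫ r = 𝟙 S := by
  obtain ⟨π, hπ⟩ := LinearMap.exists_leftInverse_of_injective φ.hom.hom.hom (hom_ker_eq_bot hφ)
  let r0 : W →ₗ[ℂ] S := (Fintype.card G : ℂ)⁻¹ • ∑ g : G, ((S.ρ g⁻¹) ∘ₗ (π ∘ₗ (W.ρ g)))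
  have hmul : ∀ (X : FDRep ℂ G) (a b : G), X.ρ (a * b) = (X.ρ a) ∘ₗ (X.ρ b) := by
    intro X a b; rw [map_mul]; rfl
  have hcomm : ∀ h : G, r0 ∘ₗ (W.ρ h) = (S.ρ h) ∘ₗ r0 := by
    intro h
    simp only [r0, LinearMap.smul_comp, LinearMap.comp_smul]
    congr 1
    rw [sum_comp', comp_sum']
    refine Fintype.sum_bijective (fun g => g * h) (Group.mulRight_bijective h) _ _ ?_
    intro g
    beta_reduce
    rw [LinearMap.comp_assoc, LinearMap.comp_assoc, ← hmul W g h, ← LinearMap.comp_assoc,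
      ← LinearMap.comp_assoc, ← hmul S h (g * h)⁻¹, show h * (g * h)⁻¹ = g⁻¹ by group,
      LinearMap.comp_assoc]
  have hφc : ∀ g : G, (W.ρ g) ∘ₗ φ.hom.hom.hom = φ.hom.hom.hom ∘ₗ (S.ρ g) := by
    intro g
    exact (congrArg (fun h => h.hom.hom) (φ.comm g)).symm
  have hr : r0 ∘ₗ φ.hom.hom.hom = LinearMap.id := by
    simp only [r0, LinearMap.smul_comp]
    rw [sum_comp']
    have : ∀ g : G, ((S.ρ g⁻¹) ∘ₗ (π ∘ₗ (W.ρ g))) ∘ₗ φ.hom.hom.hom = LinearMap.id := by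
      intro g
      rw [LinearMap.comp_assoc, LinearMap.comp_assoc, hφc g,
        show π ∘ₗ (φ.hom.hom.hom ∘ₗ (S.ρ g)) = (S.ρ g : S →ₗ[ℂ] S) from by
          rw [← LinearMap.comp_assoc, hπ, LinearMap.id_comp],
        ← hmul S g⁻¹ g, inv_mul_cancel, map_one]
      rfl
    rw [Finset.sum_congr rfl (fun g _ => this g)]
    simp only [Finset.sum_const, Finset.card_univ]
    rw [← Nat.cast_smul_eq_nsmul ℂ, smul_smul,
      inv_mul_cancel₀ (by exact_mod_cast (Fintype.card_ne_zero : Fintype.card G ≠ 0)), one_smul]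
  refine ⟨⟨InducedCategory.homMk (ModuleCat.ofHom r0), fun h => ?_⟩, ?_⟩
  · apply FGModuleCat.hom_ext
    exact hcomm h
  · apply Action.hom_ext
    apply FGModuleCat.hom_ext
    exact hr

theorem step {S W : FDRep ℂ G} [Simple S] {φ : S ⟶ W} (hφ : φ ≠ 0) :
    ∃ W' : FDRep ℂ G, finrank ℂ W = finrank ℂ S + finrank ℂ W' ∧
      finrank ℂ (S ⟶ W) ≤ 1 + finrank ℂ (S ⟶ W') := by
  classical
  obtain ⟨r, hr⟩ := exists_retraction hφ
  set p := LinearMap.ker r.hom.hom.hom with hpdef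
  have hp : ∀ (g : G), ∀ x ∈ p, W.ρ g x ∈ p := by
    intro g x hx
    have hx' : r.hom.hom.hom x = 0 := hx
    show r.hom.hom.hom (W.ρ g x) = 0
    have hc : r.hom.hom.hom ((W.ρ g) x) = (S.ρ g) (r.hom.hom.hom x) := LinearMap.congr_fun (congrArg (fun h => h.hom.hom) (r.comm g)) x
    rw [hc, hx', map_zero]
  refine ⟨subRep W p hp, ?_, ?_⟩
  · -- dimension count
    have hsurj : LinearMap.range r.hom.hom.hom = ⊤ := by
      rw [LinearMap.range_eq_top]
      intro y
      exact ⟨φ.hom.hom.hom y, LinearMap.congr_fun (congrArg (fun f => f.hom.hom.hom) hr) y⟩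
    haveI : FiniteDimensional ℂ ↑W.V.obj := (by infer_instance : FiniteDimensional ℂ W)
    have h := LinearMap.finrank_range_add_finrank_ker r.hom.hom.hom
    rw [hsurj, finrank_top] at h
    rw [subRep_finrank]
    show finrank ℂ ↑W.V.obj = finrank ℂ ↑S.V.obj + finrank ℂ ↥p
    exact h.symm
  · -- Hom space bound
    have hgr : ∀ f : S ⟶ W, (f - f ≫ (r ≫ φ)) ≫ r = 0 := by
      intro f
      simp only [Preadditive.sub_comp, Category.assoc]
      rw [show φ ≫ r = 𝟙 S from hr]
      simp
    have hmem : ∀ (f : S ⟶ W) (x : S), (f - f ≫ (r ≫ φ)).hom.hom.hom x ∈ p := by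
      intro f x
      show r.hom.hom.hom ((f - f ≫ (r ≫ φ)).hom.hom.hom x) = 0
      have := LinearMap.congr_fun (congrArg (fun f => f.hom.hom.hom) (hgr f)) x
      exact this
    let cr : (S ⟶ W) → (S ⟶ subRep W p hp) := fun f =>
      { hom := InducedCategory.homMk (ModuleCat.ofHom (LinearMap.codRestrict p (f - f ≫ (r ≫ φ)).hom.hom.hom (hmem f)))
        comm := fun g => by
          apply FGModuleCat.hom_ext
          apply LinearMap.ext
          intro x
          apply Subtype.ext
          exact LinearMap.congr_fun (congrArg (fun h => h.hom.hom) ((f - f ≫ (r ≫ φ)).comm g)) x }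
    let Θ : (S ⟶ W) →ₗ[ℂ] ((S ⟶ S) × (S ⟶ subRep W p hp)) :=
      { toFun := fun f => (f ≫ r, cr f)
        map_add' := by
          intro f₁ f₂
          refine Prod.ext (by simp [Preadditive.add_comp]) ?_
          apply Action.hom_ext
          apply FGModuleCat.hom_ext
          apply LinearMap.ext
          intro x
          apply Subtype.ext
          show ((f₁ + f₂) - (f₁ + f₂) ≫ (r ≫ φ)).hom.hom.hom x
            = ((f₁ - f₁ ≫ (r ≫ φ)) + (f₂ - f₂ ≫ (r ≫ φ))).hom.hom.hom x
          congr 1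
          simp only [Preadditive.add_comp]
          abel
        map_smul' := by
          intro c f
          refine Prod.ext (by simp) ?_
          apply Action.hom_ext
          apply FGModuleCat.hom_ext
          apply LinearMap.ext
          intro x
          apply Subtype.ext
          show ((c • f) - (c • f) ≫ (r ≫ φ)).hom.hom.hom x = (c • (f - f ≫ (r ≫ φ))).hom.hom.hom x
          congr 1
          simp only [Linear.smul_comp, smul_sub] }
    have hinj : Function.Injective Θ := by
      rw [← LinearMap.ker_eq_bot, LinearMap.ker_eq_bot']
      intro f hf
      have h1 : f ≫ r = 0 := congrArg Prod.fst hf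
      have h2 : cr f = 0 := congrArg Prod.snd hf
      have h3 : f - f ≫ (r ≫ φ) = 0 := by
        apply Action.hom_ext
        apply FGModuleCat.hom_ext
        apply LinearMap.ext
        intro x
        have := LinearMap.congr_fun (congrArg (fun f => f.hom.hom.hom) h2) x
        exact Subtype.ext_iff.mp this
      have : f = f ≫ (r ≫ φ) := by rwa [sub_eq_zero] at h3
      rw [this, ← Category.assoc, h1]
      simp
    calc finrank ℂ (S ⟶ W) ≤ finrank ℂ ((S ⟶ S) × (S ⟶ subRep W p hp)) :=
          LinearMap.finrank_le_finrank_of_injective hinj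
      _ = finrank ℂ (S ⟶ S) + finrank ℂ (S ⟶ subRep W p hp) := Module.finrank_prod
      _ = 1 + finrank ℂ (S ⟶ subRep W p hp) := by
          rw [FDRep.finrank_hom_simple_simple S S, if_pos ⟨Iso.refl S⟩]

theorem simple_finrank_pos (S : FDRep ℂ G) [Simple S] : 0 < finrank ℂ S := by
  rcases Nat.eq_zero_or_pos (finrank ℂ S) with h | h
  · exfalso
    have hs : Subsingleton S := finrank_zero_iff.mp h
    exact CategoryTheory.id_nonzero S (by ext; exact hs.elim _ _)
  · exact h

theorem multiplicity_bound (S : FDRep ℂ G) [Simple S] :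
    ∀ (d : ℕ) (W : FDRep ℂ G), finrank ℂ W = d →
      finrank ℂ (S ⟶ W) * finrank ℂ S ≤ finrank ℂ W := by
  intro d
  induction d using Nat.strong_induction_on with
  | _ d ih =>
    intro W hd
    by_cases hz : ∀ φ : S ⟶ W, φ = 0
    · have : finrank ℂ (S ⟶ W) = 0 := by
        have : Subsingleton (S ⟶ W) := ⟨fun a b => (hz a).trans (hz b).symm⟩
        exact finrank_zero_of_subsingleton
      simp [this]
    · push_neg at hz
      obtain ⟨φ, hφ⟩ := hz
      obtain ⟨W', hdim, hle⟩ := step hφ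
      have hSpos := simple_finrank_pos S
      have hW'lt : finrank ℂ W' < d := by omega
      have hrec := ih _ hW'lt W' rfl
      calc finrank ℂ (S ⟶ W) * finrank ℂ S ≤ (1 + finrank ℂ (S ⟶ W')) * finrank ℂ S :=
            Nat.mul_le_mul_right _ hle
        _ = finrank ℂ S + finrank ℂ (S ⟶ W') * finrank ℂ S := by ring
        _ ≤ finrank ℂ S + finrank ℂ W' := by omega
        _ = finrank ℂ W := hdim.symm

open scoped MonoidalCategory

theorem hom_char (X Y : FDRep ℂ G) :
    ((finrank ℂ (X ⟶ Y) : ℂ)) =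
      ⅟(Fintype.card G : ℂ) • ∑ g : G, X.character g⁻¹ * Y.character g := by
  conv_rhs =>
    enter [2, 2, g]
    rw [← char_linHom X Y g]
  rw [invOf_eq_inv, smul_eq_mul, ← Nat.card_eq_fintype_card, average_char_eq_finrank_invariants]
  norm_cast
  exact ((linHom.invariantsEquivFDRepHom (G := G) X Y).finrank_eq).symm

theorem kron_swap₁ (A B C : FDRep ℂ G) :
    finrank ℂ (A ⊗ B ⟶ C) = finrank ℂ (B ⟶ FDRep.of (Representation.dual A.ρ) ⊗ C) := by
  have key : ((finrank ℂ (A ⊗ B ⟶ C) : ℂ)) = ((finrank ℂ (B ⟶ FDRep.of (Representation.dual A.ρ) ⊗ C) : ℂ)) := by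
    rw [hom_char, hom_char]
    congr 1
    apply Finset.sum_congr rfl
    intro g _
    rw [FDRep.char_tensor, FDRep.char_tensor]
    simp only [Pi.mul_apply, FDRep.char_dual]
    ring
  exact_mod_cast key

theorem kron_swap₂ (A B C : FDRep ℂ G) :
    finrank ℂ (A ⊗ B ⟶ C) = finrank ℂ (A ⟶ FDRep.of (Representation.dual B.ρ) ⊗ C) := by
  have key : ((finrank ℂ (A ⊗ B ⟶ C) : ℂ)) = ((finrank ℂ (A ⟶ FDRep.of (Representation.dual B.ρ) ⊗ C) : ℂ)) := by
    rw [hom_char, hom_char]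
    congr 1
    apply Finset.sum_congr rfl
    intro g _
    rw [FDRep.char_tensor, FDRep.char_tensor]
    simp only [Pi.mul_apply, FDRep.char_dual]
    ring
  exact_mod_cast key

theorem finrank_tensor (X Y : FDRep ℂ G) :
    finrank ℂ ((X ⊗ Y : FDRep ℂ G)) = finrank ℂ X * finrank ℂ Y :=
  Module.finrank_tensorProduct

theorem finrank_dual (X : FDRep ℂ G) :
    finrank ℂ (FDRep.of (Representation.dual X.ρ)) = finrank ℂ X :=
  Subspace.dual_finrank_eq

theorem stmt1_aux {n : ℕ} (V : Nat.Partition n → FDRep ℂ (SymGrp n)) (hV : IsIrrFamily V)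
    (l m v : Nat.Partition n) :
    kron V l m v * dimRep (V v) ≤ dimRep (V m) * dimRep (V l) ∧
    kron V l m v * dimRep (V m) ≤ dimRep (V v) * dimRep (V l) := by
  haveI hl : Simple (V l) := hV.1 l
  haveI hm : Simple (V m) := hV.1 m
  haveI hv : Simple (V v) := hV.1 v
  constructor
  · have h := kron_swap₁ (V m) (V v) (V l)
    have hb := multiplicity_bound (V v) _
      (FDRep.of (Representation.dual (V m).ρ) ⊗ V l) rfl
    rw [finrank_tensor, finrank_dual] at hb
    have : kron V l m v = finrank ℂ (V v ⟶ FDRep.of (Representation.dual (V m).ρ) ⊗ V l) := h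
    rw [kron, dimRep, dimRep, dimRep]
    rw [show (Module.finrank ℂ ((MonoidalCategoryStruct.tensorObj (V m) (V v)) ⟶ V l))
      = finrank ℂ (V v ⟶ FDRep.of (Representation.dual (V m).ρ) ⊗ V l) from h]
    exact hb
  · have h := kron_swap₂ (V m) (V v) (V l)
    have hb := multiplicity_bound (V m) _
      (FDRep.of (Representation.dual (V v).ρ) ⊗ V l) rfl
    rw [finrank_tensor, finrank_dual] at hb
    rw [kron, dimRep, dimRep, dimRep]
    rw [show (Module.finrank ℂ ((MonoidalCategoryStruct.tensorObj (V m) (V v)) ⟶ V l))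
      = finrank ℂ (V m ⟶ FDRep.of (Representation.dual (V v).ρ) ⊗ V l) from h]
    exact hb

end
end KronAux

open KronAux

/-- For all partitions `λ, μ, ν` of `n`, the Kronecker coefficient satisfies
`g(λ,μ,ν) ≤ f^λ · min(f^μ/f^ν, f^ν/f^μ)`; in particular `g(λ,μ,ν) ≤ f^λ`. -/
theorem stmt1 (n : ℕ) (V : Nat.Partition n → FDRep ℂ (SymGrp n)) (hV : IsIrrFamily V)
    (l m v : Nat.Partition n) :
    (kron V l m v : ℝ) ≤ (dimRep (V l) : ℝ) *
      min ((dimRep (V m) : ℝ) / (dimRep (V v) : ℝ)) ((dimRep (V v) : ℝ) / (dimRep (V m) : ℝ)) ∧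
    kron V l m v ≤ dimRep (V l) := by
  haveI hl : Simple (V l) := hV.1 l
  haveI hm : Simple (V m) := hV.1 m
  haveI hv : Simple (V v) := hV.1 v
  obtain ⟨h1, h2⟩ := stmt1_aux V hV l m v
  have hbpos : 0 < dimRep (V m) := simple_finrank_pos (V m)
  have hcpos : 0 < dimRep (V v) := simple_finrank_pos (V v)
  set g := kron V l m v
  set a := dimRep (V l)
  set b := dimRep (V m)
  set c := dimRep (V v)
  have hbR : (0:ℝ) < (b:ℝ) := by exact_mod_cast hbpos
  have hcR : (0:ℝ) < (c:ℝ) := by exact_mod_cast hcpos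
  have h1R : (g:ℝ) * c ≤ b * a := by exact_mod_cast h1
  have h2R : (g:ℝ) * b ≤ c * a := by exact_mod_cast h2
  have key1 : (g:ℝ) ≤ (a:ℝ) * ((b:ℝ) / (c:ℝ)) := by
    rw [mul_div_assoc'  , le_div_iff₀ hcR]
    nlinarith
  have key2 : (g:ℝ) ≤ (a:ℝ) * ((c:ℝ) / (b:ℝ)) := by
    rw [mul_div_assoc', le_div_iff₀ hbR]
    nlinarith
  have hmin : (g:ℝ) ≤ (a:ℝ) * min ((b:ℝ)/(c:ℝ)) ((c:ℝ)/(b:ℝ)) := by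
    rw [mul_min_of_nonneg _ _ (by positivity : (0:ℝ) ≤ (a:ℝ))]
    exact le_min key1 key2
  refine ⟨hmin, ?_⟩
  have haR : (g:ℝ) ≤ (a:ℝ) := by
    rcases le_total (b:ℝ) (c:ℝ) with hbc | hbc
    · calc (g:ℝ) ≤ (a:ℝ) * ((b:ℝ)/(c:ℝ)) := key1
        _ ≤ (a:ℝ) * 1 := by
            apply mul_le_mul_of_nonneg_left _ (by positivity)
            rw [div_le_one hcR]; exact hbc
        _ = a := mul_one _
    · calc (g:ℝ) ≤ (a:ℝ) * ((c:ℝ)/(b:ℝ)) := key2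
        _ ≤ (a:ℝ) * 1 := by
            apply mul_le_mul_of_nonneg_left _ (by positivity)
            rw [div_le_one hbR]; exact hbc
        _ = a := mul_one _
  exact_mod_cast haR
end

section
/- For all partitions μ, ν of n with f^μ, f^ν ≥ D(n)/a for some a ≥ 1, there exists a partition λ of n such that f^λ ≥ D(n)/(a·√p(n)) and g(λ,μ,ν) ≥ D(n)/(a²·p(n)). -/
/-!
Complete reducibility of `V μ ⊗ V ν` gives `f^μ f^ν = ∑_λ g(λ,μ,ν) f^λ`. Choosing `λ` with the
largest term, `D²/a² ≤ f^μ f^ν ≤ p(n) g(λ,μ,ν) f^λ`, and both bounds follow from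
`g(λ,μ,ν) ≤ f^λ ≤ D`. The bound `g(λ,μ,ν) ≤ f^λ` comes from the full symmetry of Kronecker
coefficients (characters of `Sₙ` are real): reading the identity for `f^λ f^ν` and for `f^λ f^μ`
gives `g(λ,μ,ν) f^μ ≤ f^λ f^ν` and `g(λ,μ,ν) f^ν ≤ f^λ f^μ`.
-/

open CategoryTheory

/-- The largest dimension `D(n) = max_{λ ⊢ n} f^λ` of an irreducible representation. -/
noncomputable def maxDim {n : ℕ} (V : Nat.Partition n → FDRep ℂ (SymGrp n)) : ℕ :=
  Finset.univ.sup (fun l : Nat.Partition n => dimRep (V l))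

/-- The number of partitions `p(n)`. -/
def numPart (n : ℕ) : ℕ := Fintype.card (Nat.Partition n)

namespace CategoryTheory.Limits

variable {R C : Type*} [Semiring R] [Category C] [Preadditive C] [Linear R C]

noncomputable def biprod.descLinearEquiv (X Y Z : C) [HasBinaryBiproduct X Y] :
    (X ⊞ Y ⟶ Z) ≃ₗ[R] (X ⟶ Z) × (Y ⟶ Z) where
  toFun f := (biprod.inl ≫ f, biprod.inr ≫ f)
  invFun p := biprod.desc p.1 p.2
  map_add' f g := by simp
  map_smul' r f := by simp
  left_inv f := by ext <;> simp
  right_inv p := by simp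

end CategoryTheory.Limits

namespace CategoryTheory.Abelian

open Limits

variable {C : Type*} [Category C] [Abelian C]

/-- A nonzero mono `Y ⟶ X` that is not an iso splits off, by injectivity of `Y`, with its nonzero
cokernel as complement. -/
theorem exists_iso_biprod_of_not_simple [∀ Y : C, Injective Y] {X : C} (hX : ¬IsZero X)
    (hs : ¬Simple X) : ∃ Y Z : C, ¬IsZero Y ∧ ¬IsZero Z ∧ Nonempty (X ≅ Y ⊞ Z) := by
  by_contra! h
  refine hs ⟨fun {Y} f _ => ⟨fun _ hf => hX ?_, fun hf => ?_⟩⟩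
  · subst hf
    rw [IsZero.iff_id_eq_zero, ← IsIso.inv_hom_id (0 : Y ⟶ X), comp_zero]
  · by_contra hiso
    have hexact := ShortComplex.ShortExact.mk' (ShortComplex.cokernelSequence_exact f)
      (inferInstanceAs (Mono f)) inferInstance
    refine (h Y (cokernel f) (fun hY => hf (hY.eq_of_src f 0)) (fun hC => hiso ?_)).false
      hexact.splittingOfInjective.isoBinaryBiproduct
    have := Preadditive.epi_of_isZero_cokernel f hC
    exact isIso_of_mono_of_epi f

end CategoryTheory.Abelian

namespace FDRep

open Limits Module

universe u

variable {k G : Type u} [Field k] [Group G]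

theorem isZero_iff_finrank_eq_zero (X : FDRep k G) : IsZero X ↔ finrank k X = 0 := by
  let F := forget₂ (FDRep k G) (FGModuleCat k) ⋙ forget₂ (FGModuleCat k) (ModuleCat k)
  rw [finrank_zero_iff]
  change IsZero X ↔ Subsingleton (F.obj X)
  rw [← ModuleCat.isZero_iff_subsingleton]
  refine ⟨F.map_isZero, fun h => ?_⟩
  rw [IsZero.iff_id_eq_zero] at h ⊢
  rwa [← F.map_id, F.map_eq_zero_iff] at h

theorem finrank_biprod (X Y : FDRep k G) :
    finrank k ↑(X ⊞ Y) = finrank k X + finrank k Y := by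
  let F := forget₂ (FDRep k G) (FGModuleCat k) ⋙ forget₂ (FGModuleCat k) (ModuleCat k)
  have := preservesBinaryBiproducts_of_preservesBiproducts F
  exact ((F.mapBiprod X Y ≪≫ ModuleCat.biprodIsoProd _ _).toLinearEquiv.finrank_eq).trans
    (finrank_prod (R := k) (M := X) (M' := Y))

theorem finrank_hom_biprod (X Y Z : FDRep k G) :
    finrank k (X ⊞ Y ⟶ Z) = finrank k (X ⟶ Z) + finrank k (Y ⟶ Z) :=
  (biprod.descLinearEquiv X Y Z).finrank_eq.trans (finrank_prod ..)

theorem finrank_eq_sum_finrank_hom_mul_of_simple [IsAlgClosed k] {ι : Type*} [Fintype ι]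
    {V : ι → FDRep k G} (hsimple : ∀ i, Simple (V i)) (hinj : ∀ i j, Nonempty (V i ≅ V j) → i = j)
    (hcomplete : ∀ W : FDRep k G, Simple W → ∃ i, Nonempty (W ≅ V i)) (W : FDRep k G) [Simple W] :
    finrank k W = ∑ i, finrank k (W ⟶ V i) * finrank k (V i) := by
  classical
  obtain ⟨i₀, ⟨e⟩⟩ := hcomplete W inferInstance
  have hhom (i : ι) : finrank k (W ⟶ V i) = if i = i₀ then 1 else 0 := by
    have := hsimple i
    rw [finrank_hom_simple_simple]
    exact if_congr ⟨fun ⟨e'⟩ => (hinj _ _ ⟨e.symm ≪≫ e'⟩).symm, fun h => h ▸ ⟨e⟩⟩ rfl rfl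
  simp only [hhom, ite_mul, one_mul, zero_mul, Finset.sum_ite_eq', Finset.mem_univ, if_true]
  exact (isoToLinearEquiv e).finrank_eq

/-- Maschke's theorem enters through the instance making every object of `FDRep k G` injective,
which is what `Abelian.exists_iso_biprod_of_not_simple` needs. -/
theorem finrank_eq_sum_finrank_hom_mul [IsAlgClosed k] [Finite G] [NeZero (Nat.card G : k)]
    {ι : Type*} [Fintype ι] {V : ι → FDRep k G} (hsimple : ∀ i, Simple (V i))
    (hinj : ∀ i j, Nonempty (V i ≅ V j) → i = j)
    (hcomplete : ∀ W : FDRep k G, Simple W → ∃ i, Nonempty (W ≅ V i)) (W : FDRep k G) :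
    finrank k W = ∑ i, finrank k (W ⟶ V i) * finrank k (V i) := by
  induction hW : finrank k W using Nat.strong_induction_on generalizing W with
  | _ N ih =>
  subst hW
  by_cases h0 : IsZero W
  · have (i : ι) : Subsingleton (W ⟶ V i) := ⟨h0.eq_of_src⟩
    simp [(isZero_iff_finrank_eq_zero W).1 h0, finrank_zero_of_subsingleton]
  by_cases hs : Simple W
  · exact finrank_eq_sum_finrank_hom_mul_of_simple hsimple hinj hcomplete W
  obtain ⟨X, Y, hX, hY, ⟨e⟩⟩ := Abelian.exists_iso_biprod_of_not_simple h0 hs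
  have hdim : finrank k W = finrank k X + finrank k Y :=
    (isoToLinearEquiv e).finrank_eq.trans (finrank_biprod X Y)
  have hhom (i : ι) : finrank k (W ⟶ V i) = finrank k (X ⟶ V i) + finrank k (Y ⟶ V i) :=
    (Linear.homCongr k e (Iso.refl _)).finrank_eq.trans (finrank_hom_biprod X Y (V i))
  rw [isZero_iff_finrank_eq_zero] at hX hY
  simp only [hhom, add_mul, Finset.sum_add_distrib]
  rw [hdim, ← ih _ (by omega) X rfl, ← ih _ (by omega) Y rfl]

open MonoidalCategory in
theorem finrank_tensor_hom_eq_sum_character [Fintype G] [NeZero (Nat.card G : k)]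
    (hG : ∀ g : G, IsConj g g⁻¹) (X Y Z : FDRep k G) :
    (finrank k (X ⊗ Y ⟶ Z) : k) =
      (Nat.card G : k)⁻¹ * ∑ g, X.character g * Y.character g * Z.character g := by
  have := invertibleOfNonzero (NeZero.ne (Nat.card G : k))
  rw [← scalar_product_char_eq_finrank_equivariant]
  congr 1
  refine Finset.sum_congr rfl fun g _ => ?_
  obtain ⟨c, hc⟩ := isConj_iff.mp (hG g)
  rw [← hc, char_conj, char_tensor, Pi.mul_apply]
  ring

end FDRep

theorem SymGrp.isConj_inv {n : ℕ} (g : SymGrp n) : IsConj g g⁻¹ :=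
  Equiv.Perm.isConj_iff_cycleType_eq.mpr (Equiv.Perm.cycleType_inv g).symm

section Kronecker

open MonoidalCategory

variable {n : ℕ} {V : Nat.Partition n → FDRep ℂ (SymGrp n)}

theorem kron_eq_sum_character (l m v : Nat.Partition n) :
    (kron V l m v : ℂ) = (Nat.card (SymGrp n) : ℂ)⁻¹ *
      ∑ g, (V m).character g * (V v).character g * (V l).character g :=
  FDRep.finrank_tensor_hom_eq_sum_character SymGrp.isConj_inv _ _ _

theorem kron_comm₁₂ (l m v : Nat.Partition n) : kron V m l v = kron V l m v := by
  refine Nat.cast_injective (R := ℂ) ?_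
  rw [kron_eq_sum_character, kron_eq_sum_character]
  congr 1
  exact Finset.sum_congr rfl fun g _ => by ring

theorem kron_comm₂₃ (l m v : Nat.Partition n) : kron V l v m = kron V l m v := by
  refine Nat.cast_injective (R := ℂ) ?_
  rw [kron_eq_sum_character, kron_eq_sum_character]
  congr 1
  exact Finset.sum_congr rfl fun g _ => by ring

theorem dimRep_le_maxDim (l : Nat.Partition n) : dimRep (V l) ≤ maxDim V :=
  Finset.le_sup (f := fun l => dimRep (V l)) (Finset.mem_univ l)

namespace IsIrrFamily

theorem dimRep_pos (hV : IsIrrFamily V) (l : Nat.Partition n) : 0 < dimRep (V l) := by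
  have := hV.1 l
  exact Nat.pos_of_ne_zero fun h =>
    Simple.not_isZero (V l) ((FDRep.isZero_iff_finrank_eq_zero _).2 h)

theorem dimRep_mul_dimRep_eq_sum_kron (hV : IsIrrFamily V) (m v : Nat.Partition n) :
    dimRep (V m) * dimRep (V v) = ∑ l, kron V l m v * dimRep (V l) :=
  Module.finrank_tensorProduct.symm.trans
    (FDRep.finrank_eq_sum_finrank_hom_mul hV.1 hV.2.1 hV.2.2 (V m ⊗ V v))

theorem kron_mul_dimRep_le (hV : IsIrrFamily V) (l m v : Nat.Partition n) :
    kron V l m v * dimRep (V m) ≤ dimRep (V l) * dimRep (V v) := by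
  rw [← kron_comm₁₂, hV.dimRep_mul_dimRep_eq_sum_kron l v]
  exact Finset.single_le_sum (f := fun l' => kron V l' l v * dimRep (V l'))
    (fun _ _ => Nat.zero_le _) (Finset.mem_univ m)

theorem kron_le_dimRep (hV : IsIrrFamily V) (l m v : Nat.Partition n) :
    kron V l m v ≤ dimRep (V l) := by
  have h₁ := hV.kron_mul_dimRep_le l m v
  have h₂ := hV.kron_mul_dimRep_le l v m
  rw [kron_comm₂₃] at h₂
  have := hV.dimRep_pos m
  have := hV.dimRep_pos v
  nlinarith

end IsIrrFamily

end Kronecker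

theorem div_mul_sqrt_le_and_div_sq_mul_le {a p D F K : ℝ} (ha : 0 < a) (hp : 0 < p)
    (hD : 0 < D) (hFD : F ≤ D) (hK : 0 ≤ K) (hKF : K ≤ F) (h : (D / a) ^ 2 ≤ p * (K * F)) :
    D / (a * √p) ≤ F ∧ D / (a ^ 2 * p) ≤ K := by
  have hF : 0 ≤ F := hK.trans hKF
  rw [div_pow, div_le_iff₀ (by positivity)] at h
  constructor
  · refine (pow_le_pow_iff_left₀ (by positivity) hF two_ne_zero).1 ?_
    rw [div_pow, mul_pow, Real.sq_sqrt hp.le, div_le_iff₀ (by positivity)]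
    nlinarith [mul_le_mul_of_nonneg_left hKF (by positivity : 0 ≤ a ^ 2 * p * F)]
  · rw [div_le_iff₀ (by positivity)]
    nlinarith [mul_le_mul_of_nonneg_left hFD (by positivity : 0 ≤ a ^ 2 * p * K)]

/-- If `f^μ, f^ν ≥ D(n)/a` for some `a ≥ 1`, then there is `λ ⊢ n` with
`f^λ ≥ D(n)/(a√p(n))` and `g(λ,μ,ν) ≥ D(n)/(a²p(n))`. -/
theorem stmt5 (n : ℕ) (V : Nat.Partition n → FDRep ℂ (SymGrp n)) (hV : IsIrrFamily V)
    (m v : Nat.Partition n) (a : ℝ) (ha : 1 ≤ a)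
    (hm : (maxDim V : ℝ) / a ≤ (dimRep (V m) : ℝ))
    (hv : (maxDim V : ℝ) / a ≤ (dimRep (V v) : ℝ)) :
    ∃ l : Nat.Partition n,
      (maxDim V : ℝ) / (a * Real.sqrt (numPart n)) ≤ (dimRep (V l) : ℝ) ∧
      (maxDim V : ℝ) / (a ^ 2 * (numPart n : ℝ)) ≤ (kron V l m v : ℝ) := by
  obtain ⟨l, -, hl⟩ := Finset.exists_max_image Finset.univ
    (fun l => kron V l m v * dimRep (V l)) ⟨m, Finset.mem_univ m⟩
  have hsum : dimRep (V m) * dimRep (V v) ≤ numPart n * (kron V l m v * dimRep (V l)) := by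
    rw [hV.dimRep_mul_dimRep_eq_sum_kron]
    exact Finset.sum_le_card_nsmul _ _ _ fun l' _ => hl l' (Finset.mem_univ l')
  have hD : (0 : ℝ) < maxDim V := by
    exact_mod_cast (hV.dimRep_pos m).trans_le (dimRep_le_maxDim m)
  refine ⟨l, div_mul_sqrt_le_and_div_sq_mul_le (by linarith) (by exact_mod_cast Fintype.card_pos)
    hD (by exact_mod_cast dimRep_le_maxDim l) (Nat.cast_nonneg _)
    (by exact_mod_cast hV.kron_le_dimRep l m v) ?_⟩
  calc (maxDim V / a) ^ 2 ≤ (dimRep (V m) * dimRep (V v) : ℝ) := by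
        rw [sq]; exact mul_le_mul hm hv (by positivity) (Nat.cast_nonneg _)
    _ ≤ numPart n * (kron V l m v * dimRep (V l)) := by exact_mod_cast hsum
end

section
/- For all partitions λ, μ of n, the largest refined Kronecker coefficient K(λ,μ) = max_{ν⊢n} g(λ,μ,ν) satisfies f^λ f^μ / √(p(n)·n!) ≤ K(λ,μ) ≤ min(f^λ, f^μ). -/
open CategoryTheory

/-- The largest refined Kronecker coefficient `K(λ,μ) = max_{ν ⊢ n} g(λ,μ,ν)`. -/
noncomputable def maxKronRef {n : ℕ} (V : Nat.Partition n → FDRep ℂ (SymGrp n))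
    (l m : Nat.Partition n) : ℕ :=
  Finset.univ.sup (fun v : Nat.Partition n => kron V l m v)


section Aux

open Module Representation FDRep

set_option linter.unusedSectionVars false
set_option maxHeartbeats 1000000

variable {G : Type} [Group G] [Fintype G]

def IsSubrep {W : FDRep ℂ G} (p : Submodule ℂ W) : Prop := ∀ (g : G) x, x ∈ p → W.ρ g x ∈ p

noncomputable def subρ {W : FDRep ℂ G} (p : Submodule ℂ W) (hp : IsSubrep p) :
    Representation ℂ G p where
  toFun g := (W.ρ g).restrict (fun x hx => hp g x hx)
  map_one' := by ext x; simp [LinearMap.restrict_apply]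
  map_mul' g h := by ext x; simp [LinearMap.restrict_apply]

lemma subρ_coe {W : FDRep ℂ G} (p : Submodule ℂ W) (hp : IsSubrep p) (g : G) (x : p) :
    (subρ p hp g x : W) = W.ρ g (x : W) := rfl

noncomputable def subrep {W : FDRep ℂ G} (p : Submodule ℂ W) (hp : IsSubrep p) : FDRep ℂ G :=
  FDRep.of (subρ p hp)

def mkHom {X Y : FDRep ℂ G} (f : X →ₗ[ℂ] Y) (hf : ∀ (g : G) x, f (X.ρ g x) = Y.ρ g (f x)) :
    X ⟶ Y :=
  ⟨ObjectProperty.homMk (ModuleCat.ofHom f), by intro g; ext x; exact hf g x⟩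

lemma homCommApply {X Y : FDRep ℂ G} (f : X ⟶ Y) (g : G) (x : X) :
    f.hom (X.ρ g x) = Y.ρ g (f.hom x) := LinearMap.congr_fun (congrArg (fun φ => φ.hom.hom) (f.comm g)) x

lemma homExt {X Y : FDRep ℂ G} {f g : X ⟶ Y} (h : ∀ x, f.hom x = g.hom x) : f = g := by
  ext x; exact h x

lemma compHomApply {X Y Z : FDRep ℂ G} (f : X ⟶ Y) (g : Y ⟶ Z) (x : X) :
    (f ≫ g).hom x = g.hom (f.hom x) := rfl

/-- For a mono in FDRep, the underlying map is injective. -/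
lemma mono_inj {X Y : FDRep ℂ G} (f : X ⟶ Y) [Mono f] :
    Function.Injective ⇑f.hom.hom.hom := by
  rw [← LinearMap.ker_eq_bot]
  set K : Submodule ℂ X := LinearMap.ker f.hom.hom.hom with hK
  have hKsub : IsSubrep K := by
    intro g x hx
    have : f.hom.hom.hom x = 0 := hx
    have h2 : f.hom.hom.hom (X.ρ g x) = 0 := by
      rw [show f.hom.hom.hom (X.ρ g x) = f.hom (X.ρ g x) from rfl, homCommApply,
        show f.hom x = 0 from this, map_zero]
    exact h2
  set ι : subrep K hKsub ⟶ X := mkHom (X := subrep K hKsub) (K.subtype) (fun g x => rfl) with hι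
  have hcomp : ι ≫ f = (0 : subrep K hKsub ⟶ X) ≫ f := by
    apply homExt
    intro x
    rw [compHomApply, compHomApply]
    have hx0 : f.hom (ι.hom x) = 0 := x.2
    have : ((0 : subrep K hKsub ⟶ X)).hom x = 0 := by rw [Action.zero_hom]; rfl
    rw [hx0, this, map_zero]
  have hι0 : ι = 0 := by
    have := (cancel_mono f).mp hcomp
    simpa using this
  rw [hK]
  apply (Submodule.eq_bot_iff _).mpr
  intro x hx
  have : ι.hom ⟨x, hx⟩ = x := rfl
  rw [hι0] at this
  rw [← this, Action.zero_hom]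
  rfl

/-- An equivariant linear equiv gives an iso in FDRep. -/
noncomputable def mkIso {X Y : FDRep ℂ G} (e : X ≃ₗ[ℂ] Y)
    (he : ∀ (g : G) x, e (X.ρ g x) = Y.ρ g (e x)) : X ≅ Y where
  hom := mkHom (e : X →ₗ[ℂ] Y) he
  inv := mkHom (e.symm : Y →ₗ[ℂ] X) (by
    intro g y
    simp only [LinearEquiv.coe_coe]
    apply e.injective
    rw [he, e.apply_symm_apply, e.apply_symm_apply])
  hom_inv_id := by apply homExt; intro x; exact e.symm_apply_apply x
  inv_hom_id := by apply homExt; intro y; exact e.apply_symm_apply y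

lemma finrank_pos_of_simple (X : FDRep ℂ G) [Simple X] : 0 < finrank ℂ X := by
  by_contra h
  push_neg at h
  have h0 : finrank ℂ X = 0 := Nat.le_zero.mp h
  haveI : Subsingleton X := (Module.finrank_zero_iff (R := ℂ) (M := X)).mp h0
  have : (𝟙 X : X ⟶ X) = 0 := by
    apply homExt; intro x; exact @Subsingleton.elim _ this _ _
  exact CategoryTheory.id_nonzero X this

/-- A minimal nonzero invariant submodule gives a simple subrepresentation. -/
lemma simple_subrep_of_minimal {W : FDRep ℂ G} (p : Submodule ℂ W) (hp : IsSubrep p)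
    (hpbot : p ≠ ⊥)
    (hmin : ∀ q : Submodule ℂ W, IsSubrep q → q ≤ p → q = ⊥ ∨ q = p) :
    Simple (subrep p hp) := by
  constructor
  intro Y f hm
  constructor
  · intro hiso h0
    obtain ⟨x, hx⟩ := Submodule.exists_mem_ne_zero_of_ne_bot hpbot
    have hf : ∀ z, f.hom z = 0 := by
      intro z
      rw [h0, Action.zero_hom]
      rfl
    have hx0 : (⟨x, hx.1⟩ : p) = (0 : p) := by
      have h1 : f.hom ((inv f).hom ⟨x, hx.1⟩) = (⟨x, hx.1⟩ : p) := by
        have := compHomApply (inv f) f ⟨x, hx.1⟩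
        rw [IsIso.inv_hom_id, Action.id_hom] at this
        exact this.symm
      exact h1.symm.trans (hf _)
    exact hx.2 (congrArg Subtype.val hx0)
  · intro hf0
    have hinj : Function.Injective ⇑f.hom.hom.hom := mono_inj f
    let fp : Y →ₗ[ℂ] p := f.hom.hom.hom
    set r : Submodule ℂ W := (LinearMap.range fp).map p.subtype with hr
    have hrsub : IsSubrep r := by
      rintro g x hx
      rw [hr, Submodule.mem_map] at hx ⊢
      obtain ⟨z, hz, rfl⟩ := hx
      obtain ⟨y, rfl⟩ := hz
      refine ⟨f.hom (Y.ρ g y), ⟨Y.ρ g y, rfl⟩, ?_⟩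
      exact (congrArg p.subtype (homCommApply f g y)).trans (subρ_coe p hp g (f.hom y))
    have hrle : r ≤ p := by
      rintro x ⟨z, _, rfl⟩
      exact Submodule.coe_mem (show ↥p from z)
    have hrne : r ≠ ⊥ := by
      intro hbot
      apply hf0
      apply homExt
      intro y
      have hmem : p.subtype (f.hom y) ∈ r := ⟨f.hom y, ⟨y, rfl⟩, rfl⟩
      rw [hbot, Submodule.mem_bot] at hmem
      have h0 : (f.hom y : p) = 0 := Subtype.ext hmem
      rw [h0, Action.zero_hom]
      rfl
    have hreq : r = p := (hmin r hrsub hrle).resolve_left hrne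
    have hsurj : Function.Surjective ⇑f.hom.hom.hom := by
      intro z
      set z' : ↥p := z with hz'
      have hz : (z' : W) ∈ r := by rw [hreq]; exact z'.2
      obtain ⟨w, ⟨y, rfl⟩, hw⟩ := hz
      exact ⟨y, Subtype.ext hw⟩
    let e : Y ≃ₗ[ℂ] (subrep p hp) := LinearEquiv.ofBijective f.hom.hom.hom ⟨hinj, hsurj⟩
    have he : ∀ (g : G) (x : Y), e (Y.ρ g x) = (subrep p hp).ρ g (e x) :=
      fun g x => homCommApply f g x
    have hfe : f = (mkIso e he).hom := homExt (fun y => rfl)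
    rw [hfe]
    infer_instance
lemma maschke {W : FDRep ℂ G} (p : Submodule ℂ W) (hp : IsSubrep p) :
    ∃ q : Submodule ℂ W, IsSubrep q ∧ IsCompl p q := by
  classical
  obtain ⟨q₀, h₀⟩ := Submodule.exists_isCompl p
  set pr : W →ₗ[ℂ] W := p.subtype.comp (p.projectionOnto q₀ h₀) with hpr
  have hpr_mem : ∀ x : W, pr x ∈ p := fun x => (p.projectionOnto q₀ h₀ x).2
  have hpr_id : ∀ x ∈ p, pr x = x := by
    intro x hx
    simp [hpr, Submodule.projectionOnto_apply_left h₀ ⟨x, hx⟩]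
  set N : ℂ := (Fintype.card G : ℂ) with hN
  have hN0 : N ≠ 0 := by simp [hN, Fintype.card_ne_zero]
  set π : W →ₗ[ℂ] W := N⁻¹ • ∑ g : G, (W.ρ g) ∘ₗ pr ∘ₗ (W.ρ g⁻¹) with hπ
  have hπ_mem : ∀ x : W, π x ∈ p := by
    intro x
    simp only [hπ, LinearMap.smul_apply, LinearMap.sum_apply, LinearMap.comp_apply]
    exact Submodule.smul_mem _ _ (Submodule.sum_mem _ fun g _ => hp g _ (hpr_mem _))
  have hπ_id : ∀ x ∈ p, π x = x := by
    intro x hx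
    have : ∀ g : G, (W.ρ g) (pr ((W.ρ g⁻¹) x)) = x := by
      intro g
      rw [hpr_id _ (hp g⁻¹ x hx)]
      have : (W.ρ g) ((W.ρ g⁻¹) x) = ((W.ρ g) * (W.ρ g⁻¹)) x := rfl
      rw [this, ← map_mul, mul_inv_cancel, map_one, Module.End.one_apply]
    simp only [hπ, LinearMap.smul_apply, LinearMap.sum_apply, LinearMap.comp_apply, this,
      Finset.sum_const, Finset.card_univ, hN]
    rw [← Nat.cast_smul_eq_nsmul ℂ, smul_smul, inv_mul_cancel₀ hN0, one_smul]
  have comp : ∀ (a b : G) (y : W), W.ρ a (W.ρ b y) = W.ρ (a*b) y := fun a b y => by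
    rw [map_mul]; rfl
  have hπ_equiv : ∀ (h : G) (x : W), π ((W.ρ h) x) = (W.ρ h) (π x) := by
    intro h x
    simp only [hπ, LinearMap.smul_apply, LinearMap.sum_apply, LinearMap.comp_apply]
    rw [map_smul, map_sum]
    congr 1
    refine Fintype.sum_bijective (fun g => h⁻¹ * g) (Group.mulLeft_bijective h⁻¹) _ _ ?_
    intro g
    rw [comp g⁻¹ h x, mul_inv_rev, inv_inv, comp h (h⁻¹ * g), mul_inv_cancel_left]
  set π' : W →ₗ[ℂ] p := LinearMap.codRestrict p π hπ_mem with hπ'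
  refine ⟨LinearMap.ker π', ?_, ?_⟩
  · intro g x hx
    have hx' : π x = 0 := by
      simpa [hπ', LinearMap.mem_ker, Subtype.ext_iff] using hx
    simp only [LinearMap.mem_ker, hπ', Subtype.ext_iff]
    simp only [LinearMap.codRestrict_apply]
    rw [hπ_equiv g x, hx', map_zero]
    rfl
  · exact LinearMap.isCompl_of_proj (fun x => Subtype.ext (hπ_id x x.2))
lemma homFormula (X Y : FDRep ℂ G) :
    ((finrank ℂ (X ⟶ Y) : ℂ)) =
      (Fintype.card G : ℂ)⁻¹ * ∑ g : G, X.character g⁻¹ * Y.character g := by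
  haveI : Invertible (Fintype.card G : ℂ) :=
    invertibleOfNonzero (by exact_mod_cast Fintype.card_ne_zero)
  have h := FDRep.average_char_eq_finrank_invariants (FDRep.of (linHom X.ρ Y.ρ))
  have h2 : finrank ℂ (Representation.invariants (V := FDRep.of (linHom X.ρ Y.ρ)) (FDRep.of (linHom X.ρ Y.ρ)).ρ) = finrank ℂ (X ⟶ Y) :=
    (linHom.invariantsEquivFDRepHom X Y).finrank_eq
  rw [h2] at h
  rw [← h]
  simp [FDRep.char_linHom, invOf_eq_inv, smul_eq_mul]

lemma char_add' {W : FDRep ℂ G} (p q : Submodule ℂ W) (hp : IsSubrep p) (hq : IsSubrep q)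
    (h : IsCompl p q) (g : G) :
    W.character g = (subrep p hp).character g + (subrep q hq).character g := by
  classical
  have key : W.ρ g = (Submodule.prodEquivOfIsCompl p q h).conj
      (LinearMap.prodMap (subρ p hp g) (subρ q hq g)) := by
    apply LinearMap.ext
    intro x
    obtain ⟨⟨a, b⟩, rfl⟩ := (Submodule.prodEquivOfIsCompl p q h).surjective x
    rw [LinearEquiv.conj_apply, LinearMap.comp_apply, LinearMap.comp_apply,
      LinearEquiv.coe_coe, LinearEquiv.coe_coe, LinearEquiv.symm_apply_apply]
    rw [Submodule.coe_prodEquivOfIsCompl', LinearMap.prodMap_apply,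
      Submodule.coe_prodEquivOfIsCompl', map_add, subρ_coe, subρ_coe]
  show LinearMap.trace ℂ W (W.ρ g) = _
  rw [key, LinearMap.trace_conj', LinearMap.trace_prodMap']
  rfl

variable {ι : Type} [Fintype ι]

lemma decomp (Vf : ι → FDRep ℂ G) (hsimp : ∀ i, Simple (Vf i))
    (hdist : ∀ i j, Nonempty (Vf i ≅ Vf j) → i = j)
    (hcompl : ∀ X : FDRep ℂ G, Simple X → ∃ i, Nonempty (X ≅ Vf i))
    (W : FDRep ℂ G) :
    ∑ i, finrank ℂ (Vf i ⟶ W) * finrank ℂ (Vf i) = finrank ℂ W := by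
  classical
  suffices H : ∀ (n : ℕ) (W : FDRep ℂ G), finrank ℂ W = n →
      ∑ i, finrank ℂ (Vf i ⟶ W) * finrank ℂ (Vf i) = finrank ℂ W from H _ W rfl
  intro n
  induction n using Nat.strong_induction_on with
  | _ n IH =>
  intro W hW
  by_cases h0 : finrank ℂ W = 0
  · have hsub : Subsingleton W := (Module.finrank_zero_iff (R := ℂ) (M := W)).mp h0
    have hHom : ∀ i, finrank ℂ (Vf i ⟶ W) = 0 := by
      intro i
      have : Subsingleton (Vf i ⟶ W) :=
        ⟨fun f g => homExt (fun x => @Subsingleton.elim _ hsub _ _)⟩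
      exact Module.finrank_zero_of_subsingleton
    simp [hHom, h0]
  · haveI : Nontrivial W := Module.nontrivial_of_finrank_pos (R := ℂ) (Nat.pos_of_ne_zero h0)
    have hStop : (⊤ : Submodule ℂ W) ∈ {s : Submodule ℂ W | IsSubrep s ∧ s ≠ ⊥} :=
      ⟨fun g x _ => trivial, by simp⟩
    obtain ⟨p, ⟨hpsub, hpbot⟩, hminS⟩ :=
      IsArtinian.set_has_minimal {s : Submodule ℂ W | IsSubrep s ∧ s ≠ ⊥} ⟨⊤, hStop⟩
    have hmin : ∀ q : Submodule ℂ W, IsSubrep q → q ≤ p → q = ⊥ ∨ q = p := by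
      intro q hq hle
      by_cases hqb : q = ⊥
      · exact Or.inl hqb
      · refine Or.inr ?_
        by_contra hne
        exact hminS q ⟨hq, hqb⟩ (lt_of_le_of_ne hle hne)
    haveI hS : Simple (subrep p hpsub) := simple_subrep_of_minimal p hpsub hpbot hmin
    obtain ⟨i₀, ⟨e⟩⟩ := hcompl (subrep p hpsub) hS
    obtain ⟨q, hqsub, hpq⟩ := maschke p hpsub
    set P := subrep p hpsub
    set Q := subrep q hqsub
    have chW : ∀ g : G, W.character g = P.character g + Q.character g :=
      char_add' p q hpsub hqsub hpq
    have chP : ∀ g : G, P.character g = (Vf i₀).character g := by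
      intro g
      rw [FDRep.char_iso e]
    -- (a) dimension additivity
    have ha : finrank ℂ W = finrank ℂ P + finrank ℂ Q := by
      have := chW 1
      rw [FDRep.char_one, FDRep.char_one, FDRep.char_one] at this
      exact_mod_cast this
    -- (d) finrank P = finrank (Vf i₀)
    have hd : finrank ℂ P = finrank ℂ (Vf i₀) := by
      have := chP 1
      rw [FDRep.char_one, FDRep.char_one] at this
      exact_mod_cast this
    -- (b) hom additivity
    have hb : ∀ i, finrank ℂ (Vf i ⟶ W) =
        finrank ℂ (Vf i ⟶ P) + finrank ℂ (Vf i ⟶ Q) := by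
      intro i
      have : (finrank ℂ (Vf i ⟶ W) : ℂ) =
          (finrank ℂ (Vf i ⟶ P) : ℂ) + (finrank ℂ (Vf i ⟶ Q) : ℂ) := by
        rw [homFormula, homFormula, homFormula, ← mul_add, ← Finset.sum_add_distrib]
        congr 1
        refine Finset.sum_congr rfl (fun g _ => ?_)
        rw [chW g, mul_add]
      exact_mod_cast this
    -- (c) multiplicity into P
    have hc : ∀ i, finrank ℂ (Vf i ⟶ P) = if i = i₀ then 1 else 0 := by
      intro i
      have hP : (finrank ℂ (Vf i ⟶ P) : ℂ) = (finrank ℂ (Vf i ⟶ Vf i₀) : ℂ) := by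
        rw [homFormula, homFormula]
        congr 1
        refine Finset.sum_congr rfl (fun g _ => ?_)
        rw [chP g]
      have hP' : finrank ℂ (Vf i ⟶ P) = finrank ℂ (Vf i ⟶ Vf i₀) := by exact_mod_cast hP
      rw [hP']
      haveI := hsimp i
      haveI := hsimp i₀
      rw [FDRep.finrank_hom_simple_simple (Vf i) (Vf i₀)]
      by_cases hii : i = i₀
      · subst hii
        simp
      · have : ¬ Nonempty (Vf i ≅ Vf i₀) := fun ⟨ee⟩ => hii (hdist i i₀ ⟨ee⟩)
        simp [hii, this]
    -- (e) finrank Q < n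
    have hPpos : 0 < finrank ℂ P := finrank_pos_of_simple P
    have he : finrank ℂ Q < n := by omega
    have hQ := IH _ he Q rfl
    calc ∑ i, finrank ℂ (Vf i ⟶ W) * finrank ℂ (Vf i)
        = ∑ i, ((if i = i₀ then 1 else 0) + finrank ℂ (Vf i ⟶ Q)) * finrank ℂ (Vf i) := by
          refine Finset.sum_congr rfl (fun i _ => ?_)
          rw [hb i, hc i]
      _ = (∑ i, (if i = i₀ then 1 else 0) * finrank ℂ (Vf i)) +
            ∑ i, finrank ℂ (Vf i ⟶ Q) * finrank ℂ (Vf i) := by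
          rw [← Finset.sum_add_distrib]
          refine Finset.sum_congr rfl (fun i _ => ?_)
          ring
      _ = finrank ℂ (Vf i₀) + finrank ℂ Q := by
          rw [hQ]
          congr 1
          simp [ite_mul]
      _ = finrank ℂ W := by rw [ha, hd]

noncomputable def ρreg : Representation ℂ G (G → ℂ) where
  toFun g := LinearMap.funLeft ℂ ℂ (fun x => g⁻¹ * x)
  map_one' := by
    ext f x
    simp [LinearMap.funLeft_apply]
  map_mul' g h := by
    ext f x
    simp [LinearMap.funLeft_apply, mul_inv_rev, mul_assoc]

noncomputable def regRep : FDRep ℂ G := FDRep.of ρreg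

lemma char_reg [DecidableEq G] (g : G) :
    (regRep (G := G)).character g = if g = 1 then (Fintype.card G : ℂ) else 0 := by
  classical
  show LinearMap.trace ℂ (G → ℂ) (ρreg g) = _
  rw [LinearMap.trace_eq_matrix_trace ℂ (Pi.basisFun ℂ G), Matrix.trace]
  have hdiag : ∀ x : G,
      (LinearMap.toMatrix (Pi.basisFun ℂ G) (Pi.basisFun ℂ G) (ρreg g)).diag x
        = if g = 1 then 1 else 0 := by
    intro x
    rw [Matrix.diag_apply, LinearMap.toMatrix_apply]
    simp only [Pi.basisFun_apply, Pi.basisFun_repr]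
    show (Pi.single x 1 : G → ℂ) (g⁻¹ * x) = _
    rw [Pi.single_apply]
    by_cases hg : g = 1
    · simp [hg]
    · have : ¬ x = g⁻¹ * x := by
        intro hcon
        apply hg
        have := congrArg (fun y => y * x⁻¹) hcon
        simp at this
        rw [← inv_inv g]
        rw [← this]
        simp
      simp [this, hg]
  rw [Finset.sum_congr rfl (fun x _ => hdiag x)]
  simp [Finset.card_univ]

lemma sum_sq_le (Vf : ι → FDRep ℂ G) (hsimp : ∀ i, Simple (Vf i))
    (hdist : ∀ i j, Nonempty (Vf i ≅ Vf j) → i = j)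
    (hcompl : ∀ X : FDRep ℂ G, Simple X → ∃ i, Nonempty (X ≅ Vf i)) :
    ∑ i, finrank ℂ (Vf i) * finrank ℂ (Vf i) ≤ Fintype.card G := by
  classical
  have hdec := decomp Vf hsimp hdist hcompl (regRep (G := G))
  have hreg : finrank ℂ (regRep (G := G)) = Fintype.card G := by
    show finrank ℂ (G → ℂ) = Fintype.card G
    simp [Module.finrank_pi]
  have hmult : ∀ i, finrank ℂ (Vf i ⟶ regRep (G := G)) = finrank ℂ (Vf i) := by
    intro i
    have hN : (Fintype.card G : ℂ) ≠ 0 := by exact_mod_cast Fintype.card_ne_zero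
    have : (finrank ℂ (Vf i ⟶ regRep (G := G)) : ℂ) = (finrank ℂ (Vf i) : ℂ) := by
      rw [homFormula]
      rw [Finset.sum_congr rfl (fun g (_ : g ∈ Finset.univ) => by rw [char_reg g])]
      simp only [mul_ite, mul_zero]
      rw [Finset.sum_ite_eq' Finset.univ (1 : G) (fun g => (Vf i).character g⁻¹ * _)]
      simp only [Finset.mem_univ, if_true, inv_one, FDRep.char_one]
      rw [inv_mul_eq_div, mul_comm, mul_div_assoc, mul_comm, div_mul_cancel₀ _ hN]
    exact_mod_cast this
  have : ∑ i, finrank ℂ (Vf i) * finrank ℂ (Vf i)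
      = ∑ i, finrank ℂ (Vf i ⟶ regRep (G := G)) * finrank ℂ (Vf i) :=
    Finset.sum_congr rfl (fun i _ => by rw [hmult i])
  rw [this, hdec, hreg]

open scoped MonoidalCategory

lemma char_tensor_apply (X Y : FDRep ℂ G) (g : G) :
    (X ⊗ Y).character g = X.character g * Y.character g := by
  rw [FDRep.char_tensor]
  rfl

lemma kron_eq_1 (X Y Z : FDRep ℂ G) :
    finrank ℂ ((X ⊗ Y) ⟶ Z) = finrank ℂ (Y ⟶ FDRep.of (Representation.linHom X.ρ Z.ρ)) := by
  have h : (finrank ℂ ((X ⊗ Y) ⟶ Z) : ℂ) =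
      (finrank ℂ (Y ⟶ FDRep.of (Representation.linHom X.ρ Z.ρ)) : ℂ) := by
    rw [homFormula, homFormula]
    congr 1
    refine Finset.sum_congr rfl (fun g _ => ?_)
    rw [char_tensor_apply, FDRep.char_linHom]
    ring
  exact_mod_cast h

lemma kron_eq_2 (X Y Z : FDRep ℂ G) :
    finrank ℂ ((X ⊗ Y) ⟶ Z) = finrank ℂ (X ⟶ FDRep.of (Representation.linHom Y.ρ Z.ρ)) := by
  have h : (finrank ℂ ((X ⊗ Y) ⟶ Z) : ℂ) =
      (finrank ℂ (X ⟶ FDRep.of (Representation.linHom Y.ρ Z.ρ)) : ℂ) := by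
    rw [homFormula, homFormula]
    congr 1
    refine Finset.sum_congr rfl (fun g _ => ?_)
    rw [char_tensor_apply, FDRep.char_linHom]
    ring
  exact_mod_cast h

lemma kron_eq_3 (X Y Z : FDRep ℂ G) :
    finrank ℂ ((X ⊗ Y) ⟶ Z) = finrank ℂ (Z ⟶ X ⊗ Y) := by
  have h : (finrank ℂ ((X ⊗ Y) ⟶ Z) : ℂ) = (finrank ℂ (Z ⟶ X ⊗ Y) : ℂ) := by
    rw [homFormula, homFormula]
    congr 1
    refine Fintype.sum_bijective (fun g : G => g⁻¹) inv_involutive.bijective _ _ (fun g => ?_)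
    simp only [char_tensor_apply, inv_inv]
    ring
  exact_mod_cast h

lemma finrank_linHomRep (X Z : FDRep ℂ G) :
    finrank ℂ (FDRep.of (Representation.linHom X.ρ Z.ρ)) = finrank ℂ X * finrank ℂ Z := by
  have h := FDRep.char_linHom X Z 1
  rw [inv_one, FDRep.char_one, FDRep.char_one, FDRep.char_one] at h
  exact_mod_cast h

lemma finrank_tensor (X Y : FDRep ℂ G) :
    finrank ℂ ((X ⊗ Y) : FDRep ℂ G) = finrank ℂ X * finrank ℂ Y := by
  have h := char_tensor_apply X Y 1
  rw [FDRep.char_one, FDRep.char_one, FDRep.char_one] at h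
  exact_mod_cast h

lemma mult_le (Vf : ι → FDRep ℂ G) (hsimp : ∀ i, Simple (Vf i))
    (hdist : ∀ i j, Nonempty (Vf i ≅ Vf j) → i = j)
    (hcompl : ∀ X : FDRep ℂ G, Simple X → ∃ i, Nonempty (X ≅ Vf i))
    (W : FDRep ℂ G) (i : ι) :
    finrank ℂ (Vf i ⟶ W) * finrank ℂ (Vf i) ≤ finrank ℂ W := by
  rw [← decomp Vf hsimp hdist hcompl W]
  exact Finset.single_le_sum (f := fun j => finrank ℂ (Vf j ⟶ W) * finrank ℂ (Vf j))
    (fun _ _ => Nat.zero_le _) (Finset.mem_univ i)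

lemma nat_le_of_sq_le_sq {a b : ℕ} (h : a * a ≤ b * b) : a ≤ b := by
  by_contra hc
  push_neg at hc
  exact absurd h (not_le.mpr (Nat.mul_lt_mul'' hc hc))


set_option maxHeartbeats 1000000 in
/-- `f^λ f^μ / √(p(n)·n!) ≤ K(λ,μ) ≤ min(f^λ, f^μ)`. -/
theorem stmt6 (n : ℕ) (V : Nat.Partition n → FDRep ℂ (SymGrp n)) (hV : IsIrrFamily V)
    (l m : Nat.Partition n) :
    (dimRep (V l) : ℝ) * (dimRep (V m) : ℝ) / Real.sqrt ((numPart n : ℝ) * Nat.factorial n) ≤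
      (maxKronRef V l m : ℝ) ∧
    maxKronRef V l m ≤ min (dimRep (V l)) (dimRep (V m)) := by
  classical
  obtain ⟨hsimp, hdist, hcompl⟩ := hV
  have hcard : Fintype.card (SymGrp n) = Nat.factorial n := by
    rw [Fintype.card_perm, Fintype.card_fin]
  set d : Nat.Partition n → ℕ := fun v => finrank ℂ (V v) with hd
  have hdim : ∀ v, dimRep (V v) = d v := fun v => rfl
  have hpos : ∀ v, 0 < d v := fun v => by
    haveI := hsimp v
    exact finrank_pos_of_simple (V v)
  -- reinterpretations of the Kronecker coefficient
  have hk1 : ∀ v, kron V l m v =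
      finrank ℂ (V v ⟶ FDRep.of (Representation.linHom (V m).ρ (V l).ρ)) :=
    fun v => kron_eq_1 (V m) (V v) (V l)
  have hk2 : ∀ v, kron V l m v =
      finrank ℂ (V m ⟶ FDRep.of (Representation.linHom (V v).ρ (V l).ρ)) :=
    fun v => kron_eq_2 (V m) (V v) (V l)
  have hk3 : ∀ v, kron V l m v = finrank ℂ (V l ⟶ (V m ⊗ V v)) :=
    fun v => kron_eq_3 (V m) (V v) (V l)
  -- the three multiplicty bounds
  have hb1 : ∀ v, kron V l m v * d v ≤ d m * d l := by
    intro v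
    rw [hk1 v]
    have h := mult_le V hsimp hdist hcompl (FDRep.of (Representation.linHom (V m).ρ (V l).ρ)) v
    rwa [finrank_linHomRep] at h
  have hb2 : ∀ v, kron V l m v * d m ≤ d v * d l := by
    intro v
    rw [hk2 v]
    have h := mult_le V hsimp hdist hcompl (FDRep.of (Representation.linHom (V v).ρ (V l).ρ)) m
    rwa [finrank_linHomRep] at h
  have hb3 : ∀ v, kron V l m v * d l ≤ d m * d v := by
    intro v
    rw [hk3 v]
    have h := mult_le V hsimp hdist hcompl (V m ⊗ V v) l
    rwa [finrank_tensor] at h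
  -- upper bounds
  have hle_l : ∀ v, kron V l m v ≤ d l := by
    intro v
    have h' : kron V l m v * kron V l m v * (d v * d m) ≤ d l * d l * (d v * d m) := by
      calc kron V l m v * kron V l m v * (d v * d m)
          = (kron V l m v * d v) * (kron V l m v * d m) := by ring
        _ ≤ (d m * d l) * (d v * d l) := Nat.mul_le_mul (hb1 v) (hb2 v)
        _ = d l * d l * (d v * d m) := by ring
    exact nat_le_of_sq_le_sq
      (Nat.le_of_mul_le_mul_right h' (Nat.mul_pos (hpos v) (hpos m)))
  have hle_m : ∀ v, kron V l m v ≤ d m := by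
    intro v
    have h' : kron V l m v * kron V l m v * (d v * d l) ≤ d m * d m * (d v * d l) := by
      calc kron V l m v * kron V l m v * (d v * d l)
          = (kron V l m v * d v) * (kron V l m v * d l) := by ring
        _ ≤ (d m * d l) * (d m * d v) := Nat.mul_le_mul (hb1 v) (hb3 v)
        _ = d m * d m * (d v * d l) := by ring
    exact nat_le_of_sq_le_sq
      (Nat.le_of_mul_le_mul_right h' (Nat.mul_pos (hpos v) (hpos l)))
  constructor
  · -- lower bound
    set K : ℕ := maxKronRef V l m with hK
    have hKv : ∀ v, kron V l m v ≤ K := fun v => Finset.le_sup (Finset.mem_univ v)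
    -- the sum identity
    have hid : ∑ v, kron V l m v * d v = d m * d l := by
      have hdec := decomp V hsimp hdist hcompl
        (FDRep.of (Representation.linHom (V m).ρ (V l).ρ))
      rw [finrank_linHomRep] at hdec
      rw [← hdec]
      exact Finset.sum_congr rfl (fun v _ => by rw [hk1 v])
    have hsum_le : d m * d l ≤ K * ∑ v, d v := by
      rw [← hid, Finset.mul_sum]
      exact Finset.sum_le_sum (fun v _ => Nat.mul_le_mul_right (d v) (hKv v))
    -- Cauchy–Schwarz / Chebyshev
    have hcs : ((∑ v, (d v : ℝ)))^2 ≤ (numPart n : ℝ) * ∑ v, (d v : ℝ)^2 := by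
      have := sq_sum_le_card_mul_sum_sq (s := (Finset.univ : Finset (Nat.Partition n)))
        (f := fun v => (d v : ℝ))
      simpa [numPart, Finset.card_univ] using this
    have hsq : ∑ v, (d v : ℝ)^2 ≤ (Nat.factorial n : ℝ) := by
      have h := sum_sq_le V hsimp hdist hcompl
      rw [hcard] at h
      have : ((∑ v, d v * d v : ℕ) : ℝ) ≤ (Nat.factorial n : ℝ) := by exact_mod_cast h
      calc ∑ v, (d v : ℝ)^2 = ((∑ v, d v * d v : ℕ) : ℝ) := by
            push_cast
            exact Finset.sum_congr rfl (fun v _ => by ring)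
        _ ≤ _ := this
    have hsd : (∑ v, (d v : ℝ)) ≤ Real.sqrt ((numPart n : ℝ) * Nat.factorial n) := by
      have h0 : (0:ℝ) ≤ ∑ v, (d v : ℝ) :=
        Finset.sum_nonneg (fun v _ => Nat.cast_nonneg _)
      rw [← Real.sqrt_sq h0]
      apply Real.sqrt_le_sqrt
      calc (∑ v, (d v : ℝ))^2 ≤ (numPart n : ℝ) * ∑ v, (d v : ℝ)^2 := hcs
        _ ≤ (numPart n : ℝ) * Nat.factorial n := by
            apply mul_le_mul_of_nonneg_left hsq (Nat.cast_nonneg _)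
    have hsqrt_pos : 0 < Real.sqrt ((numPart n : ℝ) * Nat.factorial n) := by
      apply Real.sqrt_pos.mpr
      have h1 : 0 < numPart n := Fintype.card_pos
      have h2 : 0 < Nat.factorial n := Nat.factorial_pos n
      positivity
    rw [div_le_iff₀ hsqrt_pos]
    have hmain : (d m : ℝ) * d l ≤ K * Real.sqrt ((numPart n : ℝ) * Nat.factorial n) := by
      calc (d m : ℝ) * d l ≤ (K : ℝ) * ∑ v, (d v : ℝ) := by exact_mod_cast hsum_le
        _ ≤ K * Real.sqrt ((numPart n : ℝ) * Nat.factorial n) :=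
            mul_le_mul_of_nonneg_left hsd (Nat.cast_nonneg _)
    calc (dimRep (V l) : ℝ) * (dimRep (V m)) = (d m : ℝ) * d l := by
          rw [hdim l, hdim m]; ring
      _ ≤ K * Real.sqrt ((numPart n : ℝ) * Nat.factorial n) := hmain
  · -- upper bound
    apply Finset.sup_le
    intro v _
    rw [hdim l, hdim m]
    exact le_min (hle_l v) (hle_m v)

end Aux
end

section
/- Every Littlewood–Richardson coefficient satisfies c^λ_{μ,ν} ≤ √C(n,k), where λ ⊢ n, μ ⊢ k, ν ⊢ n−k, and C(n,k) is the binomial coefficient. -/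
open CategoryTheory

/-- The standard embedding `S_k × S_{n-k} → S_n` (trivial if `k > n`). -/
noncomputable def symEmbed (k n : ℕ) : SymGrp k × SymGrp (n - k) →* SymGrp n :=
  if h : k ≤ n then
    (Equiv.Perm.viaEmbeddingHom
        ((finSumFinEquiv.trans (finCongr (Nat.add_sub_cancel' h))).toEmbedding)).comp
      (Equiv.Perm.sumCongrHom (Fin k) (Fin (n - k)))
  else 1

/-- The external tensor product `V ⊠ W`, a representation of the product group. -/
noncomputable def extProd {k m : ℕ} (V : FDRep ℂ (SymGrp k)) (W : FDRep ℂ (SymGrp m)) :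
    FDRep ℂ (SymGrp k × SymGrp m) :=
  FDRep.of (Representation.tprod (V.ρ.comp (MonoidHom.fst _ _)) (W.ρ.comp (MonoidHom.snd _ _)))

/-- The Littlewood–Richardson coefficient `c^λ_{μ,ν}`: the multiplicity of the irreducible
`V λ` of `S_n` in the induction of `W μ ⊠ U ν` from `S_k × S_{n-k}` to `S_n`, computed via
Frobenius reciprocity as `dim Hom(Res V λ, W μ ⊠ U ν)`. -/
noncomputable def lrCoeff {n k : ℕ}
    (Vl : FDRep ℂ (SymGrp n)) (Wm : FDRep ℂ (SymGrp k)) (Uv : FDRep ℂ (SymGrp (n - k))) : ℕ :=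
  Module.finrank ℂ
    (((Action.res (FGModuleCat ℂ) (symEmbed k n)).obj Vl) ⟶ extProd Wm Uv)

open Module LinearMap Polynomial in
lemma trace_pow_pred_eq_conj {V : Type*} [AddCommGroup V] [Module ℂ V] [FiniteDimensional ℂ V]
    (f : Module.End ℂ V) (d : ℕ) (hd : d ≠ 0) (hf : f ^ d = 1) :
    LinearMap.trace ℂ V (f ^ (d - 1)) = (starRingEnd ℂ) (LinearMap.trace ℂ V f) := by
  classical
  have hdc : (d : ℂ) ≠ 0 := Nat.cast_ne_zero.mpr hd
  have hsq : Squarefree (X ^ d - 1 : ℂ[X]) :=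
    (Polynomial.X_pow_sub_one_separable_iff.mpr hdc).squarefree
  have haev : aeval f (X ^ d - 1 : ℂ[X]) = 0 := by
    simp [hf]
  have hss : f.IsSemisimple := Module.End.isSemisimple_of_squarefree_aeval_eq_zero hsq haev
  have heig : ∀ μ : ℂ, f.maxGenEigenspace μ = f.eigenspace μ := fun μ =>
    hss.isFinitelySemisimple.maxGenEigenspace_eq_eigenspace μ
  have htop : ⨆ μ : ℂ, f.eigenspace μ = ⊤ := by
    have h := Module.End.iSup_maxGenEigenspace_eq_top f
    simpa [heig] using h
  have hind := Module.End.eigenspaces_iSupIndep f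
  have hInt : DirectSum.IsInternal f.eigenspace :=
    (DirectSum.isInternal_submodule_iff_iSupIndep_and_iSup_eq_top _).mpr ⟨hind, htop⟩
  have hfin : {μ : ℂ | f.eigenspace μ ≠ ⊥}.Finite :=
    WellFoundedGT.finite_ne_bot_of_iSupIndep hind
  have hmaps : ∀ (m : ℕ) (μ : ℂ), Set.MapsTo (f ^ m) (f.eigenspace μ) (f.eigenspace μ) :=
    fun m μ => Module.End.mapsTo_genEigenspace_of_comm ((Commute.refl f).pow_right m) μ 1
  have key : ∀ (m : ℕ) (μ : ℂ) (x : V), x ∈ f.eigenspace μ → (f ^ m) x = μ ^ m • x := by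
    intro m μ x hx
    induction m with
    | zero => simp
    | succ m ih =>
      rw [pow_succ, Module.End.mul_apply, Module.End.mem_eigenspace_iff.mp hx, map_smul, ih,
        smul_smul, pow_succ, mul_comm]
  have hres : ∀ (m : ℕ) (μ : ℂ),
      LinearMap.trace ℂ (f.eigenspace μ) ((f ^ m).restrict (hmaps m μ)) =
        μ ^ m * (finrank ℂ (f.eigenspace μ) : ℂ) := by
    intro m μ
    have h1 : (f ^ m).restrict (hmaps m μ) = (μ ^ m) • (1 : Module.End ℂ (f.eigenspace μ)) := by
      ext x
      have hk2 := key m μ x.1 x.2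
      simp [Subtype.ext_iff]; exact hk2
    rw [h1, map_smul, trace_one, smul_eq_mul]
  have hroot : ∀ μ : ℂ, f.eigenspace μ ≠ ⊥ → μ ^ d = 1 := by
    intro μ hμ
    obtain ⟨x, hx, hx0⟩ := (Submodule.ne_bot_iff _).mp hμ
    have h1 : (f ^ d) x = μ ^ d • x := key d μ x hx
    rw [hf] at h1
    simp only [Module.End.one_apply] at h1
    have h2 : (μ ^ d - 1) • x = 0 := by rw [sub_smul, one_smul, ← h1, sub_self]
    rcases smul_eq_zero.mp h2 with h | h
    · exact sub_eq_zero.mp h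
    · exact absurd h hx0
  have hconj : ∀ μ : ℂ, μ ^ d = 1 → (starRingEnd ℂ) μ = μ ^ (d - 1) := by
    intro μ h1
    have hn : Complex.normSq μ = 1 := by
      have h2 : Complex.normSq μ ^ d = 1 := by
        rw [← map_pow, h1, map_one]
      have h0 : 0 ≤ Complex.normSq μ := Complex.normSq_nonneg μ
      rcases lt_trichotomy (Complex.normSq μ) 1 with h | h | h
      · exact absurd h2 (by nlinarith [pow_lt_one₀ h0 h hd])
      · exact h
      · exact absurd h2 (by nlinarith [one_lt_pow₀ h hd])
    have hμ0 : μ ≠ 0 := by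
      intro h; rw [h, zero_pow hd] at h1; exact zero_ne_one h1
    have hinv : μ⁻¹ = (starRingEnd ℂ) μ := by
      rw [Complex.inv_def, hn]
      simp
    have hpow : μ ^ (d - 1) = μ⁻¹ := by
      apply eq_inv_of_mul_eq_one_left
      rw [← pow_succ, Nat.sub_add_cancel (Nat.one_le_iff_ne_zero.mpr hd)]
      exact h1
    rw [hpow, hinv]
  have hmaps1 : ∀ μ : ℂ, Set.MapsTo f ↑(f.eigenspace μ) ↑(f.eigenspace μ) :=
    fun μ => Module.End.mapsTo_genEigenspace_of_comm (Commute.refl f) μ 1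
  have hres1 : ∀ μ : ℂ, LinearMap.trace ℂ (f.eigenspace μ) (f.restrict (hmaps1 μ)) =
      μ * (finrank ℂ (f.eigenspace μ) : ℂ) := by
    intro μ
    have h1 : f.restrict (hmaps1 μ) = μ • (1 : Module.End ℂ (f.eigenspace μ)) := by
      ext x
      have hk2 := Module.End.mem_eigenspace_iff.mp x.2
      simp [Subtype.ext_iff]; exact hk2
    rw [h1, map_smul, trace_one, smul_eq_mul]
  rw [LinearMap.trace_eq_sum_trace_restrict' hInt hfin (fun μ => hmaps (d - 1) μ),
    LinearMap.trace_eq_sum_trace_restrict' hInt hfin hmaps1, map_sum]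
  refine Finset.sum_congr rfl fun μ hμ => ?_
  rw [hres (d - 1) μ, hres1 μ, map_mul, map_natCast,
    hconj μ (hroot μ (by simpa using hμ))]

lemma char_inv_eq_conj {K : Type} [Group K] [Fintype K] (X : FDRep ℂ K) (g : K) :
    X.character g⁻¹ = (starRingEnd ℂ) (X.character g) := by
  have hd : orderOf g ≠ 0 := (orderOf_pos g).ne'
  have hpow : (X.ρ g) ^ orderOf g = 1 := by rw [← map_pow, pow_orderOf_eq_one, map_one]
  have hginv : g⁻¹ = g ^ (orderOf g - 1) := by
    apply inv_eq_of_mul_eq_one_right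
    rw [← pow_succ', Nat.sub_add_cancel (Nat.one_le_iff_ne_zero.mpr hd)]
    exact pow_orderOf_eq_one g
  show LinearMap.trace ℂ _ (X.ρ g⁻¹) = (starRingEnd ℂ) (LinearMap.trace ℂ _ (X.ρ g))
  rw [hginv, map_pow]
  exact trace_pow_pred_eq_conj (X.ρ g) (orderOf g) hd hpow

open Module in
lemma finrank_hom_mul_card {K : Type} [Group K] [Fintype K] (X Y : FDRep ℂ K) :
    (Module.finrank ℂ (X ⟶ Y) : ℂ) * (Fintype.card K : ℂ) =
      ∑ h : K, X.character h⁻¹ * Y.character h := by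
  letI : Invertible (Fintype.card K : ℂ) :=
    invertibleOfNonzero (Nat.cast_ne_zero.mpr Fintype.card_ne_zero)
  have h1 : ∑ h : K, X.character h⁻¹ * Y.character h
      = ∑ h : K, (FDRep.of (Representation.linHom X.ρ Y.ρ)).character h := by
    refine Finset.sum_congr rfl fun h _ => ?_
    rw [FDRep.char_linHom]
  rw [h1]
  have h2 := FDRep.average_char_eq_finrank_invariants
    (FDRep.of (Representation.linHom X.ρ Y.ρ))
  have h3 : finrank ℂ (Representation.invariants (FDRep.of (Representation.linHom X.ρ Y.ρ)).ρ) =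
      finrank ℂ (X ⟶ Y) :=
    (Representation.linHom.invariantsEquivFDRepHom X Y).finrank_eq
  rw [h3] at h2
  rw [← h2, Nat.card_eq_fintype_card, mul_comm, ← mul_assoc,
    mul_inv_cancel₀ (Nat.cast_ne_zero.mpr Fintype.card_ne_zero), one_mul]

lemma sum_normSq_char {K : Type} [Group K] [Fintype K] (X : FDRep ℂ K) :
    ∑ h : K, Complex.normSq (X.character h) =
      (Module.finrank ℂ (X ⟶ X)) * Fintype.card K := by
  have h1 := finrank_hom_mul_card X X
  have h2 : ∑ h : K, X.character h⁻¹ * X.character h =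
      ((∑ h : K, Complex.normSq (X.character h) : ℝ) : ℂ) := by
    push_cast
    refine Finset.sum_congr rfl fun h _ => ?_
    rw [char_inv_eq_conj, Complex.normSq_eq_conj_mul_self]
  rw [h2] at h1
  exact_mod_cast h1.symm

lemma sum_normSq_char_simple {K : Type} [Group K] [Fintype K] (X : FDRep ℂ K)
    [CategoryTheory.Simple X] :
    ∑ h : K, Complex.normSq (X.character h) = Fintype.card K := by
  rw [sum_normSq_char, FDRep.finrank_hom_simple_simple X X,
    if_pos ⟨CategoryTheory.Iso.refl X⟩, Nat.cast_one, one_mul]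

/-- Every Littlewood–Richardson coefficient satisfies `c^λ_{μ,ν} ≤ √C(n,k)`. -/
theorem stmt12 (n k : ℕ) (hk : k ≤ n)
    (V : Nat.Partition n → FDRep ℂ (SymGrp n)) (hV : IsIrrFamily V)
    (W : Nat.Partition k → FDRep ℂ (SymGrp k)) (hW : IsIrrFamily W)
    (U : Nat.Partition (n - k) → FDRep ℂ (SymGrp (n - k))) (hU : IsIrrFamily U)
    (l : Nat.Partition n) (m : Nat.Partition k) (v : Nat.Partition (n - k)) :
    (lrCoeff (V l) (W m) (U v) : ℝ) ≤ Real.sqrt (Nat.choose n k) := by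
  classical
  obtain ⟨hVs, -, -⟩ := hV
  obtain ⟨hWs, -, -⟩ := hW
  obtain ⟨hUs, -, -⟩ := hU
  haveI := hVs l; haveI := hWs m; haveI := hUs v
  set φ : SymGrp k × SymGrp (n - k) →* SymGrp n := symEmbed k n with hφdef
  have hφ : Function.Injective φ := by
    intro a b hab
    rw [hφdef, symEmbed, dif_pos hk] at hab
    exact Equiv.Perm.sumCongrHom_injective (Equiv.Perm.viaEmbeddingHom_injective _ hab)
  set A : FDRep ℂ (SymGrp k × SymGrp (n - k)) :=
    (Action.res (FGModuleCat ℂ) (symEmbed k n)).obj (V l) with hAdef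
  set S : FDRep ℂ (SymGrp k × SymGrp (n - k)) := extProd (W m) (U v) with hSdef
  have hc : lrCoeff (V l) (W m) (U v) = Module.finrank ℂ (A ⟶ S) := rfl
  have hA : ∀ h, A.character h = (V l).character (φ h) := fun h => rfl
  have hS : ∀ h, S.character h = (W m).character h.1 * (U v).character h.2 := by
    intro h
    exact LinearMap.trace_tensorProduct' _ _
  have hmain := finrank_hom_mul_card A S
  set cH : ℝ := (Fintype.card (SymGrp k × SymGrp (n - k)) : ℝ) with hcH
  have hHpos : 0 < cH := by
    rw [hcH]; exact_mod_cast Fintype.card_pos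
  have hTS : ∑ h : SymGrp k × SymGrp (n - k), Complex.normSq (S.character h) = cH := by
    have h1 : ∑ h : SymGrp k × SymGrp (n - k), Complex.normSq (S.character h)
        = (∑ x : SymGrp k, Complex.normSq ((W m).character x)) *
          (∑ y : SymGrp (n - k), Complex.normSq ((U v).character y)) := by
      rw [Fintype.sum_prod_type, Finset.sum_mul_sum]
      refine Finset.sum_congr rfl fun x _ => Finset.sum_congr rfl fun y _ => ?_
      rw [hS, Complex.normSq_mul]
    rw [h1, sum_normSq_char_simple (W m), sum_normSq_char_simple (U v), hcH,
      Fintype.card_prod]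
    push_cast
    ring
  have hTA : ∑ h : SymGrp k × SymGrp (n - k), Complex.normSq (A.character h)
      ≤ (Fintype.card (SymGrp n) : ℝ) := by
    calc ∑ h : SymGrp k × SymGrp (n - k), Complex.normSq (A.character h)
        = ∑ g ∈ Finset.univ.image φ, Complex.normSq ((V l).character g) := by
          rw [Finset.sum_image (fun a _ b _ hab => hφ hab)]
          exact Finset.sum_congr rfl fun h _ => by rw [hA]
      _ ≤ ∑ g : SymGrp n, Complex.normSq ((V l).character g) :=
          Finset.sum_le_sum_of_subset_of_nonneg (Finset.subset_univ _)
            (fun g _ _ => Complex.normSq_nonneg _)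
      _ = (Fintype.card (SymGrp n) : ℝ) := sum_normSq_char_simple (V l)
  have habs : (Module.finrank ℂ (A ⟶ S) : ℝ) * cH ≤
      ∑ h : SymGrp k × SymGrp (n - k),
        ‖A.character h‖ * ‖S.character h‖ := by
    have h1 : (Module.finrank ℂ (A ⟶ S) : ℝ) * cH =
        ‖(Module.finrank ℂ (A ⟶ S) : ℂ) *
          (Fintype.card (SymGrp k × SymGrp (n - k)) : ℂ)‖ := by
      rw [norm_mul, Complex.norm_natCast, Complex.norm_natCast, hcH]
    rw [h1, hmain]
    refine le_trans (norm_sum_le _ _) ?_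
    refine Finset.sum_le_sum fun h _ => ?_
    rw [norm_mul, char_inv_eq_conj, Complex.norm_conj]
  have hCS := Finset.sum_mul_sq_le_sq_mul_sq Finset.univ
    (fun h : SymGrp k × SymGrp (n - k) => ‖A.character h‖)
    (fun h => ‖S.character h‖)
  simp only [Complex.sq_norm] at hCS
  have hfr : 0 ≤ (Module.finrank ℂ (A ⟶ S) : ℝ) := Nat.cast_nonneg _
  have hsq1 : ((Module.finrank ℂ (A ⟶ S) : ℝ) * cH) ^ 2 ≤
      (Fintype.card (SymGrp n) : ℝ) * cH := by
    calc ((Module.finrank ℂ (A ⟶ S) : ℝ) * cH) ^ 2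
        ≤ (∑ h : SymGrp k × SymGrp (n - k),
            ‖A.character h‖ * ‖S.character h‖) ^ 2 := by
          apply pow_le_pow_left₀ (by positivity) habs
      _ ≤ (∑ h : SymGrp k × SymGrp (n - k), Complex.normSq (A.character h)) *
          (∑ h : SymGrp k × SymGrp (n - k), Complex.normSq (S.character h)) := hCS
      _ ≤ (Fintype.card (SymGrp n) : ℝ) * cH := by
          rw [hTS]
          exact mul_le_mul_of_nonneg_right hTA (le_of_lt hHpos)
  have hcards : (Fintype.card (SymGrp n) : ℝ) = (n.choose k : ℝ) * cH := by
    have h1 : Fintype.card (SymGrp n) = n.factorial := by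
      rw [Fintype.card_perm, Fintype.card_fin]
    have h2 : Fintype.card (SymGrp k × SymGrp (n - k)) =
        k.factorial * (n - k).factorial := by
      rw [Fintype.card_prod, Fintype.card_perm, Fintype.card_perm,
        Fintype.card_fin, Fintype.card_fin]
    rw [hcH, h1, h2, ← Nat.choose_mul_factorial_mul_factorial hk]
    push_cast
    ring
  have hfinal : (Module.finrank ℂ (A ⟶ S) : ℝ) ^ 2 ≤ (n.choose k : ℝ) := by
    rw [hcards] at hsq1
    have h3 : (Module.finrank ℂ (A ⟶ S) : ℝ) ^ 2 * cH ^ 2 ≤ (n.choose k : ℝ) * cH ^ 2 := by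
      calc (Module.finrank ℂ (A ⟶ S) : ℝ) ^ 2 * cH ^ 2
          = ((Module.finrank ℂ (A ⟶ S) : ℝ) * cH) ^ 2 := by ring
        _ ≤ (n.choose k : ℝ) * cH * cH := hsq1
        _ = (n.choose k : ℝ) * cH ^ 2 := by ring
    exact le_of_mul_le_mul_right h3 (by positivity)
  rw [hc]
  rw [Real.le_sqrt hfr (Nat.cast_nonneg _)]
  exact hfinal
end
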